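/- Let H assign to each point of ℝ^q a subset of ℝ^q, and call ψ : [0,∞) → ℝ^q a solution of the differential inclusion ẋ ∈ H(x) if ψ is locally absolutely continuous and ψ'(t) ∈ H(ψ(t)) for almost every t ≥ 0. Let φ be a solution whose range is contained in a compact set, and let z ∈ ℝ^q. Assume: (Lyapunov stability) for every ε > 0 there exists δ > 0 such that every solution ψ with ‖ψ(0) − z‖ < δ satisfies ‖ψ(t) − z‖ < ε for all t ≥ 0; and (almost cluster point) for every ε > 0 the Lebesgue measure of {t ≥ 0 : ‖φ(t) − z‖ ≤ ε} is infinite. Then φ(t) → z as t → ∞. -/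

import Mathlib

open MeasureTheory Filter

noncomputable section

/-- Local absolute continuity on `[0, ∞)`: differentiable a.e. with locally
integrable derivative, and the fundamental theorem of calculus holds. -/
def LocAC {F : Type*} [NormedAddCommGroup F] [NormedSpace ℝ F] [CompleteSpace F]
    (φ : ℝ → F) : Prop :=
  (∀ᵐ t ∂(volume.restrict (Set.Ici (0:ℝ))), DifferentiableAt ℝ φ t) ∧
  LocallyIntegrableOn (deriv φ) (Set.Ici 0) volume ∧
  ∀ s t : ℝ, 0 ≤ s → s ≤ t → φ t - φ s = ∫ τ in s..t, deriv φ τ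

/-- `ψ` is a solution of the differential inclusion `ẋ ∈ H(x)` on `[0, ∞)`. -/
def IsSolOf {q : ℕ} (H : EuclideanSpace ℝ (Fin q) → Set (EuclideanSpace ℝ (Fin q)))
    (ψ : ℝ → EuclideanSpace ℝ (Fin q)) : Prop :=
  LocAC ψ ∧ ∀ᵐ t ∂(volume.restrict (Set.Ici (0:ℝ))), deriv ψ t ∈ H (ψ t)

variable {F : Type*} [NormedAddCommGroup F] {c : ℝ}

lemma ae_restrict_Ici_zero_comp_add_const {P : ℝ → Prop} (hc : 0 ≤ c)
    (h : ∀ᵐ t ∂volume.restrict (Set.Ici 0), P t) :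
    ∀ᵐ t ∂volume.restrict (Set.Ici 0), P (t + c) := by
  rw [ae_restrict_iff' measurableSet_Ici] at h ⊢
  filter_upwards [(measurePreserving_add_right volume c).quasiMeasurePreserving.ae h]
    with t ht h0
  exact ht (le_add_of_le_of_nonneg h0 hc)

lemma MeasureTheory.LocallyIntegrableOn.comp_add_const_Ici_zero {f : ℝ → F}
    (hf : LocallyIntegrableOn f (Set.Ici 0)) (hc : 0 ≤ c) :
    LocallyIntegrableOn (fun t ↦ f (t + c)) (Set.Ici 0) := by
  rw [locallyIntegrableOn_iff isClosed_Ici.isLocallyClosed] at hf ⊢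
  intro K hK hKc
  have hshift := hf ((· + c) '' K)
    (Set.image_subset_iff.2 fun t ht ↦ le_add_of_le_of_nonneg (hK ht) hc)
    (hKc.image (continuous_add_const c))
  exact ((measurePreserving_add_right volume c).integrableOn_image
    (Homeomorph.addRight c).measurableEmbedding).1 hshift

variable [NormedSpace ℝ F] [CompleteSpace F]

lemma LocAC.comp_add_const {φ : ℝ → F} (hφ : LocAC φ) (hc : 0 ≤ c) :
    LocAC (fun t ↦ φ (t + c)) := by
  obtain ⟨hdiff, hint, hftc⟩ := hφ
  have hderiv : deriv (fun t ↦ φ (t + c)) = fun t ↦ deriv φ (t + c) :=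
    funext (deriv_comp_add_const φ c)
  refine ⟨?_, ?_, fun s t hs hst ↦ ?_⟩
  · filter_upwards [ae_restrict_Ici_zero_comp_add_const hc hdiff] with t ht
    exact ht.comp t ((differentiable_id.add_const c) t)
  · rw [hderiv]
    exact LocallyIntegrableOn.comp_add_const_Ici_zero hint hc
  · rw [hderiv, intervalIntegral.integral_comp_add_right (deriv φ)]
    exact hftc _ _ (by linarith) (by linarith)

lemma IsSolOf.comp_add_const {q : ℕ}
    {H : EuclideanSpace ℝ (Fin q) → Set (EuclideanSpace ℝ (Fin q))}
    {φ : ℝ → EuclideanSpace ℝ (Fin q)} (hφ : IsSolOf H φ) (hc : 0 ≤ c) :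
    IsSolOf H (fun t ↦ φ (t + c)) := by
  refine ⟨hφ.1.comp_add_const hc, ?_⟩
  filter_upwards [ae_restrict_Ici_zero_comp_add_const hc hφ.2] with t ht
  rwa [deriv_comp_add_const]

theorem stmt3_general
    (q : ℕ) (H : EuclideanSpace ℝ (Fin q) → Set (EuclideanSpace ℝ (Fin q)))
    (φ : ℝ → EuclideanSpace ℝ (Fin q)) (hφ : IsSolOf H φ)
    (z : EuclideanSpace ℝ (Fin q))
    (hstab : ∀ ε : ℝ, 0 < ε → ∃ δ : ℝ, 0 < δ ∧
      ∀ ψ : ℝ → EuclideanSpace ℝ (Fin q), IsSolOf H ψ → ‖ψ 0 - z‖ < δ →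
        ∀ t : ℝ, 0 ≤ t → ‖ψ t - z‖ < ε)
    (hclus : ∀ ε : ℝ, 0 < ε → volume {t : ℝ | 0 ≤ t ∧ ‖φ t - z‖ ≤ ε} = ⊤) :
    Filter.Tendsto φ Filter.atTop (nhds z) := by
  rw [Metric.tendsto_atTop]
  intro ε hε
  obtain ⟨δ, hδ, hδstab⟩ := hstab ε hε
  obtain ⟨t₀, ht₀, hclose⟩ : ∃ t₀, 0 ≤ t₀ ∧ ‖φ t₀ - z‖ ≤ δ / 2 :=
    nonempty_of_measure_ne_zero (μ := volume) <|
      (hclus (δ / 2) (half_pos hδ)).symm ▸ ENNReal.top_ne_zero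
  refine ⟨t₀, fun t ht ↦ ?_⟩
  -- Stability applied to the solution restarted at time `t₀`, which starts `δ`-close to `z`.
  have hstay := hδstab (fun s ↦ φ (s + t₀)) (hφ.comp_add_const ht₀)
    (by simpa using hclose.trans_lt (half_lt_self hδ)) (t - t₀) (sub_nonneg.2 ht)
  rwa [sub_add_cancel, ← dist_eq_norm] at hstay

/-- a Lyapunov stable equilibrium that is an almost cluster point of a
precompact solution is its limit. -/
theorem stmt3
    (q : ℕ) (H : EuclideanSpace ℝ (Fin q) → Set (EuclideanSpace ℝ (Fin q)))
    (φ : ℝ → EuclideanSpace ℝ (Fin q)) (hφ : IsSolOf H φ)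
    (D : Set (EuclideanSpace ℝ (Fin q))) (hD : IsCompact D)
    (hrange : ∀ t : ℝ, 0 ≤ t → φ t ∈ D)
    (z : EuclideanSpace ℝ (Fin q))
    (hstab : ∀ ε : ℝ, 0 < ε → ∃ δ : ℝ, 0 < δ ∧
      ∀ ψ : ℝ → EuclideanSpace ℝ (Fin q), IsSolOf H ψ → ‖ψ 0 - z‖ < δ →
        ∀ t : ℝ, 0 ≤ t → ‖ψ t - z‖ < ε)
    (hclus : ∀ ε : ℝ, 0 < ε → volume {t : ℝ | 0 ≤ t ∧ ‖φ t - z‖ ≤ ε} = ⊤) :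
    Filter.Tendsto φ Filter.atTop (nhds z) :=
  stmt3_general q H φ hφ z hstab hclus

end
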